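/- Let m, n be positive integers, let ε̄ = (0,…,0 | −1,…,−1) ∈ ℝ^{m+n} (even components 0, odd components −1), and let γ ∈ ℝ. Set Λ = γ ε̄. Then the type 2 unitarity condition holds for Λ — namely, either (Λ+ρ, ε_1 − δ_1) < 0, or there exists k ∈ {1,…,m} with (Λ+ρ, ε_k − δ_1) = 0 and (Λ, ε_k − ε_1) = 0 — if and only if γ ∈ {0, 1, 2, …, m−1} or γ > m−1. -/
import Mathlib


open Finset

/-- The `i`-th standard basis vector `ε_i` (1-based, `1 ≤ i ≤ m`) of `ℝ^{m+n}`. -/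
noncomputable def eps (m n : ℕ) (i : ℕ) : Fin (m + n) → ℝ :=
  fun j => if (j : ℕ) + 1 = i then 1 else 0

/-- The `(m+μ)`-th standard basis vector `δ_μ` (1-based, `1 ≤ μ ≤ n`) of `ℝ^{m+n}`. -/
noncomputable def delta (m n : ℕ) (μ : ℕ) : Fin (m + n) → ℝ :=
  fun j => if (j : ℕ) + 1 = m + μ then 1 else 0

/-- The `a`-th component (1-based) of a vector in `ℝ^{m+n}`. -/
noncomputable def comp (m n : ℕ) (x : Fin (m + n) → ℝ) (a : ℕ) : ℝ :=
  if h : 1 ≤ a ∧ a ≤ m + n then x ⟨a - 1, by omega⟩ else 0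

/-- The graded bilinear form `(Λ,Λ') = Σ_{i=1}^m Λ_i Λ'_i − Σ_{μ=1}^n Λ_{m+μ} Λ'_{m+μ}`. -/
noncomputable def gform (m n : ℕ) (x y : Fin (m + n) → ℝ) : ℝ :=
  (∑ i ∈ Finset.Icc 1 m, comp m n x i * comp m n y i)
    - ∑ μ ∈ Finset.Icc 1 n, comp m n x (m + μ) * comp m n y (m + μ)

/-- The graded half-sum of positive roots
`ρ = (1/2) Σ_{j=1}^m (m−n−2j+1) ε_j + (1/2) Σ_{ν=1}^n (m+n−2ν+1) δ_ν`. -/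
noncomputable def rho (m n : ℕ) : Fin (m + n) → ℝ :=
  (∑ j ∈ Finset.Icc 1 m, (((m : ℝ) - (n : ℝ) - 2 * (j : ℝ) + 1) / 2) • eps m n j)
    + ∑ ν ∈ Finset.Icc 1 n, (((m : ℝ) + (n : ℝ) - 2 * (ν : ℝ) + 1) / 2) • delta m n ν

/-- Dominance: `Λ_1 ≥ … ≥ Λ_m` and `Λ_{m+1} ≥ … ≥ Λ_{m+n}`. -/
def Dominant (m n : ℕ) (Λ : Fin (m + n) → ℝ) : Prop :=
  (∀ i, 1 ≤ i → i < m → comp m n Λ (i + 1) ≤ comp m n Λ i) ∧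
  (∀ μ, 1 ≤ μ → μ < n → comp m n Λ (m + μ + 1) ≤ comp m n Λ (m + μ))

/-- The weight `ε̄ = (0,…,0 | −1,…,−1)`. -/
noncomputable def epsBar (m n : ℕ) : Fin (m + n) → ℝ := fun j => if (j : ℕ) < m then 0 else -1

lemma comp_eps (m n j a : ℕ) (h1 : 1 ≤ a) (h2 : a ≤ m + n) :
    comp m n (eps m n j) a = if a = j then 1 else 0 := by
  unfold comp eps
  rw [dif_pos ⟨h1, h2⟩]
  have : a - 1 + 1 = a := by omega
  simp [this]

lemma comp_delta (m n μ a : ℕ) (h1 : 1 ≤ a) (h2 : a ≤ m + n) :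
    comp m n (delta m n μ) a = if a = m + μ then 1 else 0 := by
  unfold comp delta
  rw [dif_pos ⟨h1, h2⟩]
  have : a - 1 + 1 = a := by omega
  simp [this]

lemma comp_add (m n : ℕ) (x y : Fin (m+n) → ℝ) (a : ℕ) :
    comp m n (x + y) a = comp m n x a + comp m n y a := by
  unfold comp; split <;> simp

lemma comp_sub (m n : ℕ) (x y : Fin (m+n) → ℝ) (a : ℕ) :
    comp m n (x - y) a = comp m n x a - comp m n y a := by
  unfold comp; split <;> simp

lemma comp_smul (m n : ℕ) (c : ℝ) (x : Fin (m+n) → ℝ) (a : ℕ) :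
    comp m n (c • x) a = c * comp m n x a := by
  unfold comp; split <;> simp

lemma comp_sum {ι : Type*} (m n : ℕ) (s : Finset ι) (f : ι → Fin (m+n) → ℝ) (a : ℕ) :
    comp m n (∑ i ∈ s, f i) a = ∑ i ∈ s, comp m n (f i) a := by
  unfold comp; split <;> simp

lemma comp_rho_even (m n a : ℕ) (h1 : 1 ≤ a) (h2 : a ≤ m) :
    comp m n (rho m n) a = ((m:ℝ) - n - 2*a + 1)/2 := by
  have hr : a ≤ m + n := by omega
  unfold rho
  rw [comp_add, comp_sum, comp_sum]
  have e1 : ∀ j ∈ Finset.Icc 1 m,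
      comp m n ((((m : ℝ) - (n : ℝ) - 2 * (j : ℝ) + 1) / 2) • eps m n j) a
      = if a = j then ((m : ℝ) - (n : ℝ) - 2 * (j : ℝ) + 1) / 2 else 0 := by
    intro j _
    rw [comp_smul, comp_eps m n j a h1 hr]
    split <;> simp
  have e2 : ∀ ν ∈ Finset.Icc 1 n,
      comp m n ((((m : ℝ) + (n : ℝ) - 2 * (ν : ℝ) + 1) / 2) • delta m n ν) a = 0 := by
    intro ν hν
    simp only [Finset.mem_Icc] at hν
    rw [comp_smul, comp_delta m n ν a h1 hr, if_neg (by omega)]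
    ring
  rw [Finset.sum_congr rfl e1, Finset.sum_congr rfl e2, Finset.sum_ite_eq]
  simp [Finset.mem_Icc, h1, h2]

lemma comp_rho_odd (m n μ : ℕ) (h1 : 1 ≤ μ) (h2 : μ ≤ n) :
    comp m n (rho m n) (m+μ) = ((m:ℝ) + n - 2*μ + 1)/2 := by
  have hl : 1 ≤ m + μ := by omega
  have hr : m + μ ≤ m + n := by omega
  unfold rho
  rw [comp_add, comp_sum, comp_sum]
  have e1 : ∀ j ∈ Finset.Icc 1 m,
      comp m n ((((m : ℝ) - (n : ℝ) - 2 * (j : ℝ) + 1) / 2) • eps m n j) (m+μ) = 0 := by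
    intro j hj
    simp only [Finset.mem_Icc] at hj
    rw [comp_smul, comp_eps m n j (m+μ) hl hr, if_neg (by omega)]
    ring
  have e2 : ∀ ν ∈ Finset.Icc 1 n,
      comp m n ((((m : ℝ) + (n : ℝ) - 2 * (ν : ℝ) + 1) / 2) • delta m n ν) (m+μ)
      = if μ = ν then ((m : ℝ) + (n : ℝ) - 2 * (ν : ℝ) + 1) / 2 else 0 := by
    intro ν _
    rw [comp_smul, comp_delta m n ν (m+μ) hl hr]
    by_cases h : μ = ν
    · subst h; simp
    · rw [if_neg (by omega), if_neg h]; ring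
  rw [Finset.sum_congr rfl e1, Finset.sum_congr rfl e2, Finset.sum_ite_eq]
  simp [Finset.mem_Icc, h1, h2]

lemma comp_epsBar_even (m n a : ℕ) (h1 : 1 ≤ a) (h2 : a ≤ m) :
    comp m n (epsBar m n) a = 0 := by
  have : a ≤ m + n := by omega
  unfold comp epsBar
  rw [dif_pos ⟨h1, this⟩]
  simp only []
  rw [if_pos (by omega)]

lemma comp_epsBar_odd (m n μ : ℕ) (h1 : 1 ≤ μ) (h2 : μ ≤ n) :
    comp m n (epsBar m n) (m+μ) = -1 := by
  unfold comp epsBar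
  rw [dif_pos ⟨by omega, by omega⟩]
  simp only []
  rw [if_neg (by omega)]

lemma gform_eps_delta (m n k : ℕ) (hk1 : 1 ≤ k) (hk2 : k ≤ m) (hn : 0 < n)
    (x : Fin (m+n) → ℝ) :
    gform m n x (eps m n k - delta m n 1) = comp m n x k + comp m n x (m+1) := by
  unfold gform
  have e1 : ∀ i ∈ Finset.Icc 1 m,
      comp m n x i * comp m n (eps m n k - delta m n 1) i
      = if i = k then comp m n x i else 0 := by
    intro i hi
    simp only [Finset.mem_Icc] at hi
    rw [comp_sub, comp_eps m n k i hi.1 (by omega), comp_delta m n 1 i hi.1 (by omega)]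
    have hne : ¬ (i = m + 1) := by omega
    rw [if_neg hne]
    by_cases h : i = k <;> simp [h]
  have e2 : ∀ μ ∈ Finset.Icc 1 n,
      comp m n x (m+μ) * comp m n (eps m n k - delta m n 1) (m+μ)
      = if μ = 1 then -comp m n x (m+μ) else 0 := by
    intro μ hμ
    simp only [Finset.mem_Icc] at hμ
    rw [comp_sub, comp_eps m n k (m+μ) (by omega) (by omega),
      comp_delta m n 1 (m+μ) (by omega) (by omega)]
    have hne : ¬ (m + μ = k) := by omega
    rw [if_neg hne]
    by_cases h : μ = 1
    · subst h; simp
    · rw [if_neg (by omega), if_neg h]; ring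
  rw [Finset.sum_congr rfl e1, Finset.sum_congr rfl e2, Finset.sum_ite_eq',
    Finset.sum_ite_eq', if_pos (by simp [Finset.mem_Icc, hk1, hk2] : k ∈ Finset.Icc 1 m),
    if_pos (by simp [Finset.mem_Icc]; omega : 1 ∈ Finset.Icc 1 n)]
  ring

lemma gform_eps_eps (m n k l : ℕ) (hk1 : 1 ≤ k) (hk2 : k ≤ m) (hl1 : 1 ≤ l) (hl2 : l ≤ m)
    (x : Fin (m+n) → ℝ) :
    gform m n x (eps m n k - eps m n l) = comp m n x k - comp m n x l := by
  unfold gform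
  have e1 : ∀ i ∈ Finset.Icc 1 m,
      comp m n x i * comp m n (eps m n k - eps m n l) i
      = (if i = k then comp m n x i else 0) - (if i = l then comp m n x i else 0) := by
    intro i hi
    simp only [Finset.mem_Icc] at hi
    rw [comp_sub, comp_eps m n k i hi.1 (by omega), comp_eps m n l i hi.1 (by omega)]
    by_cases h : i = k <;> by_cases h' : i = l <;> simp [h, h', mul_ite] <;> split <;> simp_all
  have e2 : ∀ μ ∈ Finset.Icc 1 n,
      comp m n x (m+μ) * comp m n (eps m n k - eps m n l) (m+μ) = 0 := by
    intro μ hμ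
    simp only [Finset.mem_Icc] at hμ
    rw [comp_sub, comp_eps m n k (m+μ) (by omega) (by omega),
      comp_eps m n l (m+μ) (by omega) (by omega), if_neg (by omega), if_neg (by omega)]
    ring
  rw [Finset.sum_congr rfl e1, Finset.sum_congr rfl e2, Finset.sum_sub_distrib,
    Finset.sum_ite_eq', Finset.sum_ite_eq']
  simp [Finset.mem_Icc, hk1, hk2, hl1, hl2]

lemma key1 (m n k : ℕ) (hk1 : 1 ≤ k) (hk2 : k ≤ m) (hn : 0 < n) (γ : ℝ) :
    gform m n (γ • epsBar m n + rho m n) (eps m n k - delta m n 1) = (m:ℝ) - k - γ := by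
  rw [gform_eps_delta m n k hk1 hk2 hn, comp_add, comp_add, comp_smul, comp_smul,
    comp_epsBar_even m n k hk1 hk2, comp_epsBar_odd m n 1 le_rfl hn,
    comp_rho_even m n k hk1 hk2, comp_rho_odd m n 1 le_rfl hn]
  push_cast
  ring

lemma key2 (m n k : ℕ) (hk1 : 1 ≤ k) (hk2 : k ≤ m) (hm : 0 < m) (γ : ℝ) :
    gform m n (γ • epsBar m n) (eps m n k - eps m n 1) = 0 := by
  rw [gform_eps_eps m n k 1 hk1 hk2 le_rfl hm, comp_smul, comp_smul,
    comp_epsBar_even m n k hk1 hk2, comp_epsBar_even m n 1 le_rfl hm]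
  ring


/-- `V(γ ε̄)` is type 2 unitary iff `γ ∈ {0,1,…,m−1}` or `γ > m−1`. -/
theorem type2_gammaEpsBar_iff (m n : ℕ) (hm : 0 < m) (hn : 0 < n) (γ : ℝ) :
    (gform m n (γ • epsBar m n + rho m n) (eps m n 1 - delta m n 1) < 0 ∨
      ∃ k, 1 ≤ k ∧ k ≤ m ∧
        gform m n (γ • epsBar m n + rho m n) (eps m n k - delta m n 1) = 0 ∧
        gform m n (γ • epsBar m n) (eps m n k - eps m n 1) = 0)
    ↔ ((∃ j : ℕ, j ≤ m - 1 ∧ γ = (j : ℝ)) ∨ γ > (m : ℝ) - 1) := by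
  have h1 := key1 m n 1 le_rfl hm hn γ
  constructor
  · rintro (h | ⟨k, hk1, hk2, he, -⟩)
    · right; rw [h1] at h; push_cast at h ⊢; linarith
    · left
      refine ⟨m - k, by omega, ?_⟩
      rw [key1 m n k hk1 hk2 hn γ] at he
      have : ((m - k : ℕ) : ℝ) = (m : ℝ) - k := by
        rw [Nat.cast_sub hk2]
      rw [this]; linarith
  · rintro (⟨j, hj, rfl⟩ | h)
    · right
      have hjm : j ≤ m - 1 := hj
      refine ⟨m - j, by omega, by omega, ?_, key2 m n (m - j) (by omega) (by omega) hm _⟩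
      rw [key1 m n (m - j) (by omega) (by omega) hn]
      have : ((m - j : ℕ) : ℝ) = (m : ℝ) - j := by
        rw [Nat.cast_sub (by omega)]
      rw [this]; ring
    · left; rw [h1]; push_cast; linarith
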